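/- For every fixed k ∈ {1,…,6}, the exact distortion of φ_{k,n} tends to 3 as n → ∞; that is, lim_{n→∞} (max_{z∈𝔻}|φ'_{k,n}(z)|) / (min_{z∈𝔻}|φ'_{k,n}(z)|) = 3. -/

import Mathlib

open Complex Metric Set
open scoped ENNReal

noncomputable section

/-- λ = √3 -/
def lam : ℝ := Real.sqrt 3

/-- The Möbius map f(z) = ((λ−1)z+1)/(−z+λ+1). -/
def apolF : ℂ → ℂ := fun z => (((lam : ℂ) - 1) * z + 1) / (-z + (lam : ℂ) + 1)

/-- Rotation by angle θ. -/
def Rot (θ : ℝ) : ℂ → ℂ := fun z => Complex.exp ((θ : ℂ) * Complex.I) * z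

/-- θ_k = (−1)^k · 2π/3 -/
def thetaA (k : ℕ) : ℝ := (-1 : ℝ) ^ k * (2 * Real.pi / 3)

/-- θ'_k = 2πk/3 -/
def thetaB (k : ℕ) : ℝ := 2 * Real.pi * k / 3

/-- The Apollonian generators φ_{k,n} = R_{θ'_k} ∘ f^n ∘ R_{θ_k} ∘ f. -/
def phi (k n : ℕ) : ℂ → ℂ := Rot (thetaB k) ∘ (apolF^[n]) ∘ Rot (thetaA k) ∘ apolF

/-- The closed unit disk 𝔻. -/
def unitD : Set ℂ := Metric.closedBall (0 : ℂ) 1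

/-!
Every map in sight is a Möbius transformation, and composing them multiplies their matrices.
The matrices `P t = !![λ - t, t; -t, λ + t]` satisfy `P s * P t = λ • P (s + t)` and `f` is the
Möbius map of `P 1`, so `f^[n]` is that of `P n`. Hence near `𝔻` the map `φ_{k,n}` is `e^{iθ'_k}`
times the Möbius map of a matrix with determinant of modulus `λ⁴ = 9` and bottom row `(b_n, a_n)`,
so `|φ'_{k,n}(z)| = 9 / |b_n z + a_n|²`. Its extrema over `𝔻` are `9 / (|a_n| ∓ |b_n|)²`, and the
distortion is `((|a_n| + |b_n|) / (|a_n| - |b_n|))²`. Both `a_n` and `b_n` are affine in `n`, with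
slopes of moduli `α = √(6 + 3√3)` and `β = √(6 - 3√3)`; since `αβ = 3`, the distortion tends to
`(α² + β² + 2αβ) / (α² + β² - 2αβ) = 18 / 6 = 3`.
-/

open Filter Topology

section Mobius

/-- `z ↦ (a z + b) / (c z + d)` for `M = !![a, b; c, d]`, with the junk value `0` at the pole. -/
def mobius (M : Matrix (Fin 2) (Fin 2) ℂ) (z : ℂ) : ℂ := (M 0 0 * z + M 0 1) / (M 1 0 * z + M 1 1)

variable (M N : Matrix (Fin 2) (Fin 2) ℂ) {z : ℂ}

theorem mobius_mul (hz : N 1 0 * z + N 1 1 ≠ 0) : mobius M (mobius N z) = mobius (M * N) z := by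
  have clear_denom (a b : ℂ) : a * ((N 0 0 * z + N 0 1) / (N 1 0 * z + N 1 1)) + b
      = (a * (N 0 0 * z + N 0 1) + b * (N 1 0 * z + N 1 1)) / (N 1 0 * z + N 1 1) := by
    rw [← mul_div_assoc, div_add' _ _ _ hz]
  rw [mobius, mobius, clear_denom, clear_denom, div_div_div_cancel_right₀ hz]
  simp only [mobius, Matrix.mul_apply, Fin.sum_univ_two]
  congr 1 <;> ring

theorem mobius_smul {c : ℂ} (hc : c ≠ 0) : mobius (c • M) = mobius M := by
  ext z
  simp only [mobius, Matrix.smul_apply, smul_eq_mul, mul_assoc, ← mul_add]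
  exact mul_div_mul_left _ _ hc

theorem hasDerivAt_mobius (hz : M 1 0 * z + M 1 1 ≠ 0) :
    HasDerivAt (mobius M) (M.det / (M 1 0 * z + M 1 1) ^ 2) z := by
  have hnum := ((hasDerivAt_id z).const_mul (M 0 0)).add_const (M 0 1)
  have hden := ((hasDerivAt_id z).const_mul (M 1 0)).add_const (M 1 1)
  refine (hnum.div hden hz).congr_deriv ?_
  rw [Matrix.det_fin_two]
  simp only [id, mul_one]
  ring

end Mobius

def parabolicMat (c t : ℂ) : Matrix (Fin 2) (Fin 2) ℂ := !![c - t, t; -t, c + t]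

theorem parabolicMat_mul (c s t : ℂ) :
    parabolicMat c s * parabolicMat c t = c • parabolicMat c (s + t) := by
  rw [parabolicMat, parabolicMat, parabolicMat, Matrix.mul_fin_two, Matrix.smul_of]
  congr 1
  simp only [Matrix.smul_cons, smul_eq_mul, Matrix.smul_empty, Matrix.vecCons_inj, and_true]
  refine ⟨⟨?_, ?_⟩, ?_, ?_⟩ <;> ring

theorem det_parabolicMat (c t : ℂ) : (parabolicMat c t).det = c ^ 2 := by
  rw [parabolicMat, Matrix.det_fin_two_of]; ring

theorem mobius_parabolicMat_zero {c : ℂ} (hc : c ≠ 0) (z : ℂ) :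
    mobius (parabolicMat c 0) z = z := by
  simp [mobius, parabolicMat, mul_div_cancel_left₀ _ hc]

theorem iterate_mobius_parabolicMat {c : ℂ} (hc : c ≠ 0) {n : ℕ} {w : ℂ}
    (hw : ∀ m < n, (parabolicMat c m) 1 0 * w + (parabolicMat c m) 1 1 ≠ 0) :
    (mobius (parabolicMat c 1))^[n] w = mobius (parabolicMat c n) w := by
  induction n with
  | zero => simp [mobius_parabolicMat_zero hc]
  | succ n ih =>
    rw [Function.iterate_succ_apply', ih fun m hm => hw m (hm.trans n.lt_succ_self),
      mobius_mul _ _ (hw n n.lt_succ_self), parabolicMat_mul, mobius_smul _ hc, add_comm]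
    push_cast; rfl

theorem parabolicMat_denom_ne_zero {c : ℝ} (hc : 0 < c) (m : ℕ) {w : ℂ} (hw : ‖w‖ ≤ 1) :
    (parabolicMat c m) 1 0 * w + (parabolicMat c m) 1 1 ≠ 0 := by
  intro h
  have hpole : (m : ℂ) * w = ((c + m : ℝ) : ℂ) := by
    simp only [parabolicMat, Matrix.of_apply, Matrix.cons_val', Matrix.cons_val_zero,
      Matrix.cons_val_one, Matrix.empty_val', Matrix.cons_val_fin_one] at h
    push_cast; linear_combination -h
  have hnorm := congrArg norm hpole
  rw [norm_mul, Complex.norm_natCast, Complex.norm_real,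
    Real.norm_of_nonneg (by positivity)] at hnorm
  nlinarith [(m.cast_nonneg : (0 : ℝ) ≤ m)]

theorem norm_mobius_parabolicMat_one_le {c : ℝ} (hc : 0 ≤ c) {z : ℂ} (hz : ‖z‖ ≤ 1) :
    ‖mobius (parabolicMat c 1) z‖ ≤ 1 := by
  rw [mobius, norm_div]
  refine div_le_one_of_le₀ ?_ (norm_nonneg _)
  simp only [parabolicMat, Matrix.of_apply, Matrix.cons_val', Matrix.cons_val_zero,
    Matrix.cons_val_one, Matrix.empty_val', Matrix.cons_val_fin_one]
  rw [← sq_le_sq₀ (norm_nonneg _) (norm_nonneg _), Complex.sq_norm, Complex.sq_norm]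
  have hz2 : 0 ≤ 1 - (z.re * z.re + z.im * z.im) := by
    rw [← Complex.normSq_apply, ← Complex.sq_norm]; nlinarith [norm_nonneg z]
  simp only [Complex.normSq_apply, Complex.add_re, Complex.add_im, Complex.mul_re, Complex.mul_im,
    Complex.sub_re, Complex.sub_im, Complex.neg_re, Complex.neg_im, Complex.ofReal_re,
    Complex.ofReal_im, Complex.one_re, Complex.one_im]
  -- `‖-z + c + 1‖² - ‖(c - 1) z + 1‖² = c (2 y² + 2 (1 - x)² + c (1 - x² - y²))` for `z = x + i y`
  nlinarith [mul_nonneg hc (sq_nonneg z.im), mul_nonneg hc (sq_nonneg (1 - z.re)),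
    mul_nonneg (mul_nonneg hc hc) hz2]

section ExtremaOnDisk

variable {a b : ℂ}

theorem exists_mul_add_eq_mul (ha : a ≠ 0) {s : ℝ} (hs : |s| ≤ 1) :
    ∃ z ∈ closedBall (0 : ℂ) 1, b * z + a = ((1 + s * ‖b‖ / ‖a‖ : ℝ) : ℂ) * a := by
  refine ⟨s * ‖b‖ * a / (‖a‖ * b), ?_, ?_⟩
  · rw [mem_closedBall_zero_iff]
    simp only [norm_div, norm_mul, Complex.norm_real, Real.norm_eq_abs, abs_norm]
    rw [mul_assoc, mul_div_assoc, mul_comm ‖b‖ ‖a‖]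
    exact mul_le_one₀ hs (by positivity) (div_self_le_one _)
  · rcases eq_or_ne b 0 with rfl | hb
    · simp
    · have : (‖a‖ : ℂ) ≠ 0 := ofReal_ne_zero.2 (norm_ne_zero_iff.2 ha)
      push_cast
      field_simp
      ring

theorem isGreatest_norm_mul_add (ha : a ≠ 0) :
    IsGreatest ((fun z => ‖b * z + a‖) '' closedBall 0 1) (‖a‖ + ‖b‖) := by
  obtain ⟨z, hz, hza⟩ := exists_mul_add_eq_mul (b := b) ha (s := 1) (by norm_num)
  refine ⟨⟨z, hz, ?_⟩, ?_⟩
  · change ‖b * z + a‖ = _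
    rw [hza, norm_mul, norm_real, Real.norm_of_nonneg (by positivity)]
    field_simp
  · rintro _ ⟨z, hz, rfl⟩
    rw [mem_closedBall_zero_iff] at hz
    calc ‖b * z + a‖ ≤ ‖b‖ * ‖z‖ + ‖a‖ := (norm_add_le _ _).trans_eq (by rw [norm_mul])
      _ ≤ ‖a‖ + ‖b‖ := by nlinarith [norm_nonneg b]

theorem isLeast_norm_mul_add (hab : ‖b‖ < ‖a‖) :
    IsLeast ((fun z => ‖b * z + a‖) '' closedBall 0 1) (‖a‖ - ‖b‖) := by
  have ha : a ≠ 0 := norm_pos_iff.1 ((norm_nonneg b).trans_lt hab)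
  obtain ⟨z, hz, hza⟩ := exists_mul_add_eq_mul (b := b) ha (s := -1) (by norm_num)
  refine ⟨⟨z, hz, ?_⟩, ?_⟩
  · have : 0 ≤ 1 + -1 * ‖b‖ / ‖a‖ := by
      rw [neg_one_mul, neg_div, ← sub_eq_add_neg, sub_nonneg, div_le_one (by positivity)]
      exact hab.le
    change ‖b * z + a‖ = _
    rw [hza, norm_mul, norm_real, Real.norm_of_nonneg this]
    field_simp
    ring
  · rintro _ ⟨z, hz, rfl⟩
    rw [mem_closedBall_zero_iff] at hz
    calc ‖a‖ - ‖b‖ ≤ ‖a‖ - ‖b‖ * ‖z‖ := by nlinarith [norm_nonneg b]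
      _ ≤ ‖b * z + a‖ := by
        rw [← norm_mul, add_comm]; exact norm_sub_le_norm_add _ _

theorem sSup_div_sInf_image_closedBall (hab : ‖b‖ < ‖a‖) {C : ℝ} (hC : 0 < C) :
    sSup ((fun z => C / ‖b * z + a‖ ^ 2) '' closedBall 0 1) /
        sInf ((fun z => C / ‖b * z + a‖ ^ 2) '' closedBall 0 1) =
      ((‖a‖ + ‖b‖) / (‖a‖ - ‖b‖)) ^ 2 := by
  have ha : a ≠ 0 := norm_pos_iff.1 ((norm_nonneg b).trans_lt hab)
  have hmin := isLeast_norm_mul_add hab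
  have hanti : AntitoneOn (fun t : ℝ => C / t ^ 2) ((fun z => ‖b * z + a‖) '' closedBall 0 1) :=
    fun s hs t _ hst => div_le_div_of_nonneg_left hC.le
      (pow_pos ((sub_pos.2 hab).trans_le (hmin.2 hs)) 2)
      (pow_le_pow_left₀ ((sub_pos.2 hab).le.trans (hmin.2 hs)) hst 2)
  rw [← image_image (fun t : ℝ => C / t ^ 2), (hanti.map_isLeast hmin).csSup_eq,
    (hanti.map_isGreatest (isGreatest_norm_mul_add ha)).csInf_eq]
  have : 0 < ‖a‖ + ‖b‖ := by positivity
  have : 0 < ‖a‖ - ‖b‖ := sub_pos.2 hab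
  field_simp

end ExtremaOnDisk

section AffineSequences

variable (u p v q : ℂ)

theorem tendsto_norm_natCast_mul_add_div :
    Tendsto (fun n : ℕ => ‖(n : ℂ) * u + p‖ / n) atTop (𝓝 ‖u‖) := by
  have h : Tendsto (fun n : ℕ => ‖u + p / n‖) atTop (𝓝 ‖u‖) := by
    simpa using (tendsto_const_nhds.add (tendsto_const_div_atTop_nhds_zero_nat p)).norm
  refine h.congr' ((eventually_ne_atTop 0).mono fun n hn => ?_)
  have hn' : (n : ℂ) ≠ 0 := Nat.cast_ne_zero.2 hn
  show _ = ‖(n : ℂ) * u + p‖ / n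
  rw [← Complex.norm_natCast, ← norm_div, add_div, mul_div_cancel_left₀ _ hn']

variable {u v}

theorem eventually_norm_natCast_mul_add_lt (h : ‖v‖ < ‖u‖) :
    ∀ᶠ n : ℕ in atTop, ‖(n : ℂ) * v + q‖ < ‖(n : ℂ) * u + p‖ := by
  filter_upwards [(tendsto_norm_natCast_mul_add_div v q).eventually_lt
    (tendsto_norm_natCast_mul_add_div u p) h, eventually_gt_atTop 0] with n hn hn₀
  exact (div_lt_div_iff_of_pos_right (Nat.cast_pos.2 hn₀)).1 hn

theorem tendsto_sq_norm_add_div_norm_sub (h : ‖v‖ < ‖u‖) :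
    Tendsto (fun n : ℕ => ((‖(n : ℂ) * u + p‖ + ‖(n : ℂ) * v + q‖) /
        (‖(n : ℂ) * u + p‖ - ‖(n : ℂ) * v + q‖)) ^ 2)
      atTop (𝓝 (((‖u‖ + ‖v‖) / (‖u‖ - ‖v‖)) ^ 2)) := by
  have hu := tendsto_norm_natCast_mul_add_div u p
  have hv := tendsto_norm_natCast_mul_add_div v q
  refine (((hu.add hv).div (hu.sub hv) (sub_pos.2 h).ne').pow 2).congr'
    ((eventually_ne_atTop 0).mono fun n hn => ?_)
  simp only [Pi.div_apply, ← add_div, ← sub_div]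
  rw [div_div_div_cancel_right₀ (Nat.cast_ne_zero.2 hn)]

end AffineSequences

theorem lam_pos : 0 < lam := Real.sqrt_pos.2 (by norm_num)

theorem lam_sq : lam ^ 2 = 3 := Real.sq_sqrt (by norm_num)

theorem apolF_eq_mobius : apolF = mobius (parabolicMat lam 1) := by
  ext z
  simp only [apolF, mobius, parabolicMat, Matrix.of_apply, Matrix.cons_val', Matrix.cons_val_zero,
    Matrix.cons_val_one, Matrix.cons_val_fin_one, neg_mul, one_mul, add_assoc]

/-- The matrix of `R_{θ'_k}⁻¹ ∘ φ_{k,n}`. -/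
def phiMat (k n : ℕ) : Matrix (Fin 2) (Fin 2) ℂ :=
  parabolicMat lam n * !![exp (thetaA k * I), 0; 0, 1] * parabolicMat lam 1

theorem phi_eventuallyEq_mobius (k n : ℕ) {z : ℂ} (hz : ‖z‖ ≤ 1) :
    phi k n =ᶠ[𝓝 z] fun v => exp (thetaB k * I) * mobius (phiMat k n) v := by
  set ω := exp (thetaA k * I)
  have hpole : (parabolicMat lam 1) 1 0 * z + (parabolicMat lam 1) 1 1 ≠ 0 := by
    simpa using parabolicMat_denom_ne_zero lam_pos 1 hz
  have hf : ContinuousAt apolF z :=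
    apolF_eq_mobius ▸ (hasDerivAt_mobius _ hpole).continuousAt
  have hw : ‖ω * apolF z‖ ≤ 1 := by
    rw [norm_mul, norm_exp_ofReal_mul_I, one_mul, apolF_eq_mobius]
    exact norm_mobius_parabolicMat_one_le lam_pos.le hz
  have hden₁ : ∀ᶠ v in 𝓝 z, (parabolicMat lam 1) 1 0 * v + (parabolicMat lam 1) 1 1 ≠ 0 :=
    (by fun_prop : Continuous fun v : ℂ => _ * v + _).continuousAt.eventually_ne hpole
  have hdenₙ : ∀ᶠ v in 𝓝 z, ∀ m ∈ Set.Iio n,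
      (parabolicMat lam m) 1 0 * (ω * apolF v) + (parabolicMat lam m) 1 1 ≠ 0 := by
    refine (eventually_all_finite (Set.finite_Iio n)).2 fun m _ => ?_
    have hcont : ContinuousAt (fun v => ω * apolF v) z := continuousAt_const.mul hf
    exact ((by fun_prop : Continuous fun w : ℂ => _ * w + _).continuousAt.comp hcont).eventually_ne
      (parabolicMat_denom_ne_zero lam_pos m hw)
  filter_upwards [hden₁, hdenₙ] with v hv₁ hvₙ
  rw [apolF_eq_mobius] at hvₙ
  have hrot : ω * mobius (parabolicMat lam 1) v
      = mobius (!![ω, 0; 0, 1] * parabolicMat lam 1) v := by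
    rw [← mobius_mul _ _ hv₁]
    simp [mobius]
  have hv₁' : (!![ω, 0; 0, 1] * parabolicMat lam 1) 1 0 * v
      + (!![ω, 0; 0, 1] * parabolicMat lam 1) 1 1 ≠ 0 := by
    simpa [Matrix.mul_apply, Fin.sum_univ_two] using hv₁
  change exp (thetaB k * I) * apolF^[n] (ω * apolF v) = _
  rw [apolF_eq_mobius, iterate_mobius_parabolicMat (ofReal_ne_zero.2 lam_pos.ne') hvₙ, hrot,
    mobius_mul _ _ hv₁', phiMat, Matrix.mul_assoc]

theorem norm_det_phiMat (k n : ℕ) : ‖(phiMat k n).det‖ = 9 := by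
  rw [phiMat, Matrix.det_mul, Matrix.det_mul, det_parabolicMat, det_parabolicMat,
    Matrix.det_fin_two_of]
  simp only [mul_one, mul_zero, sub_zero, norm_mul, norm_pow, norm_real, norm_exp_ofReal_mul_I,
    Real.norm_of_nonneg lam_pos.le, lam_sq]
  norm_num

theorem norm_deriv_phi (k n : ℕ) {z : ℂ} (hz : ‖z‖ ≤ 1)
    (hpole : phiMat k n 1 0 * z + phiMat k n 1 1 ≠ 0) :
    ‖deriv (phi k n) z‖ = 9 / ‖phiMat k n 1 0 * z + phiMat k n 1 1‖ ^ 2 := by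
  have h := ((hasDerivAt_mobius _ hpole).const_mul (exp (thetaB k * I))).congr_of_eventuallyEq
    (phi_eventuallyEq_mobius k n hz)
  rw [h.deriv, norm_mul, norm_exp_ofReal_mul_I, one_mul, norm_div, norm_pow, norm_det_phiMat]

theorem sSup_div_sInf_norm_deriv_phi (k n : ℕ) (h : ‖phiMat k n 1 0‖ < ‖phiMat k n 1 1‖) :
    sSup ((fun z => ‖deriv (phi k n) z‖) '' unitD) /
        sInf ((fun z => ‖deriv (phi k n) z‖) '' unitD) =
      ((‖phiMat k n 1 1‖ + ‖phiMat k n 1 0‖) / (‖phiMat k n 1 1‖ - ‖phiMat k n 1 0‖)) ^ 2 := by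
  have hderiv : EqOn (fun z => ‖deriv (phi k n) z‖)
      (fun z => 9 / ‖phiMat k n 1 0 * z + phiMat k n 1 1‖ ^ 2) unitD := by
    intro z hz
    have hpole : 0 < ‖phiMat k n 1 0 * z + phiMat k n 1 1‖ :=
      (sub_pos.2 h).trans_le ((isLeast_norm_mul_add h).2 ⟨z, hz, rfl⟩)
    exact norm_deriv_phi k n (mem_closedBall_zero_iff.1 hz) (norm_pos_iff.1 hpole)
  rw [image_congr hderiv]
  exact sSup_div_sInf_image_closedBall h (by norm_num)

theorem norm_phiMat_one_zero (k n : ℕ) :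
    ‖phiMat k n 1 0‖ = ‖n * (exp (thetaA k * I) * (lam - 1) + 1) + lam‖ := by
  rw [← norm_neg, phiMat, parabolicMat, parabolicMat, Matrix.mul_fin_two, Matrix.mul_fin_two]
  simp only [Matrix.of_apply, Matrix.cons_val', Matrix.cons_val_zero, Matrix.cons_val_one,
    Matrix.cons_val_fin_one]
  congr 1
  ring

theorem phiMat_one_one (k n : ℕ) :
    phiMat k n 1 1 = n * (lam + 1 - exp (thetaA k * I)) + lam * (lam + 1) := by
  rw [phiMat, parabolicMat, parabolicMat, Matrix.mul_fin_two, Matrix.mul_fin_two]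
  simp only [Matrix.of_apply, Matrix.cons_val', Matrix.cons_val_one, Matrix.cons_val_fin_one]
  ring

theorem cos_thetaA (k : ℕ) : Real.cos (thetaA k) = -1 / 2 := by
  have h : Real.cos (2 * Real.pi / 3) = -1 / 2 := by
    rw [show 2 * Real.pi / 3 = Real.pi - Real.pi / 3 by ring, Real.cos_pi_sub,
      Real.cos_pi_div_three]
    norm_num
  rcases neg_one_pow_eq_or ℝ k with hk | hk <;> simp [thetaA, hk, h]

theorem norm_sq_ofReal_add_mul_exp_thetaA (k : ℕ) (x y : ℝ) :
    ‖(x : ℂ) + y * exp (thetaA k * I)‖ ^ 2 = x ^ 2 - x * y + y ^ 2 := by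
  have hsin : Real.sin (thetaA k) ^ 2 = 3 / 4 := by
    nlinarith [Real.sin_sq_add_cos_sq (thetaA k), cos_thetaA k]
  rw [Complex.sq_norm, Complex.normSq_apply]
  simp only [Complex.add_re, Complex.add_im, Complex.mul_re, Complex.mul_im, Complex.ofReal_re,
    Complex.ofReal_im, exp_ofReal_mul_I_re, exp_ofReal_mul_I_im, cos_thetaA]
  linear_combination y ^ 2 * hsin

theorem sq_add_div_sub_eq_three {α β : ℝ} (hα : 0 ≤ α) (hβ : 0 ≤ β)
    (hα2 : α ^ 2 = 6 + 3 * lam) (hβ2 : β ^ 2 = 6 - 3 * lam) :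
    ((α + β) / (α - β)) ^ 2 = 3 := by
  have hαβ : α * β = 3 := by
    refine (pow_left_inj₀ (by positivity) (by norm_num) two_ne_zero).1 ?_
    linear_combination β ^ 2 * hα2 + (6 + 3 * lam) * hβ2 - 9 * lam_sq
  have hne : α - β ≠ 0 := by
    intro h
    nlinarith [lam_pos]
  rw [div_pow, div_eq_iff (pow_ne_zero 2 hne)]
  linear_combination -2 * hα2 - 2 * hβ2 + 8 * hαβ

theorem apollonian_distortion_limit_general (k : ℕ) :
    Filter.Tendsto
      (fun n : ℕ =>
        sSup ((fun z => ‖deriv (phi k n) z‖) '' unitD) /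
          sInf ((fun z => ‖deriv (phi k n) z‖) '' unitD))
      Filter.atTop (nhds 3) := by
  set ω := exp (thetaA k * I)
  have hu : ‖(lam : ℂ) + 1 - ω‖ ^ 2 = 6 + 3 * lam := by
    rw [show (lam : ℂ) + 1 - ω = ((lam + 1 : ℝ) : ℂ) + ((-1 : ℝ) : ℂ) * ω by push_cast; ring,
      norm_sq_ofReal_add_mul_exp_thetaA]
    linear_combination lam_sq
  have hv : ‖ω * (lam - 1) + 1‖ ^ 2 = 6 - 3 * lam := by
    rw [show ω * (lam - 1) + 1 = ((1 : ℝ) : ℂ) + ((lam - 1 : ℝ) : ℂ) * ω by push_cast; ring,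
      norm_sq_ofReal_add_mul_exp_thetaA]
    linear_combination lam_sq
  have hvu : ‖ω * (lam - 1) + 1‖ < ‖(lam : ℂ) + 1 - ω‖ :=
    lt_of_pow_lt_pow_left₀ 2 (norm_nonneg _) (by rw [hu, hv]; linarith [lam_pos])
  have hlim := tendsto_sq_norm_add_div_norm_sub (lam * (lam + 1)) lam hvu
  rw [sq_add_div_sub_eq_three (norm_nonneg _) (norm_nonneg _) hu hv] at hlim
  refine hlim.congr' ?_
  filter_upwards [eventually_norm_natCast_mul_add_lt (lam * (lam + 1)) lam hvu] with n hn
  rw [← norm_phiMat_one_zero, ← phiMat_one_one] at hn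
  rw [sSup_div_sInf_norm_deriv_phi k n hn, norm_phiMat_one_zero, phiMat_one_one]

/-- The exact distortion of φ_{k,n} tends to 3 as n → ∞. -/
theorem apollonian_distortion_limit (k : ℕ) (hk1 : 1 ≤ k) (hk6 : k ≤ 6) :
    Filter.Tendsto
      (fun n : ℕ =>
        sSup ((fun z => ‖deriv (phi k n) z‖) '' unitD) /
          sInf ((fun z => ‖deriv (phi k n) z‖) '' unitD))
      Filter.atTop (nhds 3) :=
  apollonian_distortion_limit_general k

end
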